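/- For every real x one has F(x) = ∛(f₊(x)) + ∛(f₋(x)) > 0, where f₊(x) = √(1 − x² + x⁴/3) + (√3/9)x³ and f₋(x) = √(1 − x² + x⁴/3) − (√3/9)x³. -/
import Mathlib


open Real

/-- The real (signed) cube root. -/
noncomputable def cbrt (x : ℝ) : ℝ := Real.sign x * |x| ^ ((1 : ℝ) / 3)

/-- `f₊(x) = √(1 − x² + x⁴/3) + (√3/9)x³`. -/
noncomputable def fPlus (x : ℝ) : ℝ :=
  Real.sqrt (1 - x ^ 2 + x ^ 4 / 3) + (Real.sqrt 3 / 9) * x ^ 3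

/-- `f₋(x) = √(1 − x² + x⁴/3) − (√3/9)x³`. -/
noncomputable def fMinus (x : ℝ) : ℝ :=
  Real.sqrt (1 - x ^ 2 + x ^ 4 / 3) - (Real.sqrt 3 / 9) * x ^ 3

/-- `F(x) = ∛(f₊(x)) + ∛(f₋(x))`. -/
noncomputable def Ffun (x : ℝ) : ℝ := cbrt (fPlus x) + cbrt (fMinus x)

lemma cbrt_cube (x : ℝ) : cbrt x ^ 3 = x := by
  unfold cbrt
  rw [mul_pow, ← Real.rpow_natCast (|x| ^ ((1 : ℝ) / 3)) 3,
    ← Real.rpow_mul (abs_nonneg x)]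
  norm_num
  rcases lt_trichotomy x 0 with h | h | h
  · rw [Real.sign_of_neg h, abs_of_neg h]; ring
  · simp [h]
  · rw [Real.sign_of_pos h, abs_of_pos h]; ring

/-- `F(x) > 0` for every real `x`. -/
theorem stmt_6 : ∀ x : ℝ, 0 < Ffun x := by
  intro x
  set a := cbrt (fPlus x) with ha'
  set b := cbrt (fMinus x) with hb'
  have ha : a ^ 3 = fPlus x := cbrt_cube _
  have hb : b ^ 3 = fMinus x := cbrt_cube _
  have hD : 0 < Real.sqrt (1 - x ^ 2 + x ^ 4 / 3) :=
    Real.sqrt_pos.mpr (by nlinarith [sq_nonneg (x ^ 2 - 3 / 2)])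
  have hpos : 0 < a ^ 3 + b ^ 3 := by
    rw [ha, hb]; unfold fPlus fMinus; linarith
  show 0 < a + b
  by_contra h
  push_neg at h
  have h2 : 0 ≤ a ^ 2 - a * b + b ^ 2 := by
    nlinarith [sq_nonneg (a - b), sq_nonneg (a + b)]
  have h3 : (a + b) * (a ^ 2 - a * b + b ^ 2) ≤ 0 :=
    mul_nonpos_of_nonpos_of_nonneg h h2
  nlinarith
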